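/- arXiv:2205.10248 — 2 statements merged into one kernel-verified Lean document; each statement's English description precedes it below -/
import Mathlib

section
/- The free semigroup of rank one (ℕ under addition, positive integers) is not an automaton semigroup: no finite complete deterministic automaton generates a semigroup isomorphic to the free monogenic semigroup. -/
/-- A complete deterministic automaton is given by `step : Q → A → A × Q`,
where `step p a = (b, q)` for the unique transition `p —a/b→ q`.
`out step p u` is the output `p ∘ u` of the run from `p` on input `u`. -/
def out {Q A : Type*} (step : Q → A → A × Q) : Q → List A → List A
  | _, [] => []
  | p, a :: u => (step p a).1 :: out step (step p a).2 u

/-- `st step p u` is the state `p · u` in which the run from `p` on input `u` ends. -/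
def st {Q A : Type*} (step : Q → A → A × Q) : Q → List A → Q
  | p, [] => p
  | p, a :: u => st step (step p a).2 u

/-- The action of a state sequence: the head of the list acts first, so the
Lean list `[p₁, p₂, …, pₙ]` represents the state sequence `pₙ…p₂p₁` and
`seqOut step [p₁, …, pₙ] u = pₙ ∘ (… p₂ ∘ (p₁ ∘ u))`. -/
def seqOut {Q A : Type*} (step : Q → A → A × Q) : List Q → List A → List A
  | [], u => u
  | p :: ps, u => seqOut step ps (out step p u)

/-- `seqSt step 𝐩 u` is the state sequence `𝐩 · u` (again with the first-acting
state at the head): `(pₙ…p₂p₁) · u = ((pₙ…p₂) · (p₁ ∘ u)) (p₁ · u)`. -/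
def seqSt {Q A : Type*} (step : Q → A → A × Q) : List Q → List A → List Q
  | [], _ => []
  | p :: ps, u => st step p u :: seqSt step ps (out step p u)

/-- The semigroup `S(T)` generated by a complete deterministic automaton: the
subsemigroup of `Function.End (List A)` (functions under composition) generated by
the state functions `u ↦ p ∘ u`. -/
def autSemigroup {Q A : Type*} (step : Q → A → A × Q) :
    Subsemigroup (Function.End (List A)) :=
  Subsemigroup.closure (Set.range fun p : Q => (out step p : Function.End (List A)))

def aseq {Q A : Type*} (step : Q → A → A × Q) (q₀ : Q) (a : A) : ℕ → A
  | 0 => a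
  | n + 1 => (step q₀ (aseq step q₀ a n)).1

def sExp {Q A : Type*} (step : Q → A → A × Q) (q₀ : Q) (α : Q → ℕ) (a : A) : ℕ → ℕ
  | 0 => 0
  | n + 1 => α (step q₀ (aseq step q₀ a n)).2 + sExp step q₀ α a n

/-- The free semigroup of rank one (the positive integers under addition) is not an
automaton semigroup: no finite complete deterministic automaton generates a
semigroup isomorphic to the free monogenic semigroup. -/
theorem free_monogenic_not_automaton_semigroup :
    ¬ ∃ (Q A : Type) (_ : Fintype Q) (_ : Fintype A) (step : Q → A → A × Q),
        Nonempty (autSemigroup step ≃* Multiplicative ℕ+) := by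
  rintro ⟨Q, A, _, _, step, ⟨e⟩⟩
  classical
  have hmemσ : ∀ p : Q, (out step p : Function.End (List A)) ∈ autSemigroup step := fun p =>
    Subsemigroup.subset_closure (Set.mem_range_self p)
  set ν : autSemigroup step → ℕ := fun z => ((Multiplicative.toAdd (e z) : ℕ+) : ℕ) with hνdef
  have hν1 : ∀ z, 1 ≤ ν z := fun z => (Multiplicative.toAdd (e z)).one_le
  have hνmul : ∀ y w, ν (y * w) = ν y + ν w := by
    intro y w
    simp only [hνdef, map_mul, toAdd_mul, PNat.add_coe]
  have hνinj : ∀ y w : autSemigroup step, ν y = ν w → y = w := by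
    intro y w h
    exact e.injective (Multiplicative.toAdd.injective (PNat.coe_injective h))
  set x : autSemigroup step := e.symm (Multiplicative.ofAdd 1) with hxdef
  have hνx : ν x = 1 := by
    simp only [hνdef, hxdef, MulEquiv.apply_symm_apply, toAdd_ofAdd, PNat.one_coe]
  -- x is a single generator
  have hxgen : ∃ q₀ : Q, (x : Function.End (List A)) = out step q₀ := by
    have hx : (x : Function.End (List A)) ∈ autSemigroup step := x.2
    have key : ∀ (g : Function.End (List A)) (hg : g ∈ autSemigroup step),
        (∃ q₀ : Q, g = out step q₀) ∨
          ∃ y ∈ autSemigroup step, ∃ w ∈ autSemigroup step, g = y * w := by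
      intro g hg
      induction hg using Subsemigroup.closure_induction with
      | mem z hz => obtain ⟨p, rfl⟩ := hz; exact Or.inl ⟨p, rfl⟩
      | mul y w hy hw _ _ => exact Or.inr ⟨y, hy, w, hw, rfl⟩
    rcases key _ hx with ⟨q₀, h⟩ | ⟨y, hy, w, hw, h⟩
    · exact ⟨q₀, h⟩
    · exfalso
      have : x = (⟨y, hy⟩ : autSemigroup step) * ⟨w, hw⟩ := Subtype.ext h
      have h2 := hνmul ⟨y, hy⟩ ⟨w, hw⟩
      rw [← this, hνx] at h2
      have := hν1 ⟨y, hy⟩; have := hν1 ⟨w, hw⟩; omega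
  obtain ⟨q₀, hxf⟩ := hxgen
  set f : Function.End (List A) := out step q₀ with hfdef
  have hpowmem : ∀ n : ℕ, 1 ≤ n → f ^ n ∈ autSemigroup step := by
    intro n hn
    induction n with
    | zero => omega
    | succ n ih =>
      rcases Nat.eq_zero_or_pos n with rfl | hn'
      · rw [pow_one, ← hxf]; exact x.2
      · rw [pow_succ]; exact mul_mem (ih hn') (hxf ▸ x.2)
  have hνpow : ∀ (n : ℕ) (hn : 1 ≤ n) (hmem : f ^ n ∈ autSemigroup step),
      ν ⟨f ^ n, hmem⟩ = n := by
    intro n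
    induction n with
    | zero => omega
    | succ n ih =>
      intro hn hmem
      rcases Nat.eq_zero_or_pos n with rfl | hn'
      · have hx1 : (⟨f ^ 1, hmem⟩ : autSemigroup step) = x :=
          Subtype.ext (by show f ^ 1 = ↑x; rw [pow_one, hxf])
        rw [hx1, hνx]
      · have hm : f ^ n ∈ autSemigroup step := hpowmem n hn'
        have hx2 : (⟨f ^ (n + 1), hmem⟩ : autSemigroup step) = ⟨f ^ n, hm⟩ * x :=
          Subtype.ext (by show f ^ (n + 1) = f ^ n * ↑x; rw [pow_succ, hxf])
        rw [hx2, hνmul, ih hn' hm, hνx]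
  have hfree : ∀ i j : ℕ, 1 ≤ i → 1 ≤ j → f ^ i = f ^ j → i = j := by
    intro i j hi hj h
    have h2 : (⟨f ^ i, hpowmem i hi⟩ : autSemigroup step) = ⟨f ^ j, hpowmem j hj⟩ :=
      Subtype.ext h
    have h4 := congrArg ν h2
    rw [hνpow i hi, hνpow j hj] at h4
    exact h4
  set α : Q → ℕ := fun p => ν ⟨out step p, hmemσ p⟩ with hαdef
  have hα1 : ∀ p, 1 ≤ α p := fun p => hν1 _
  have hout : ∀ p, (out step p : Function.End (List A)) = f ^ α p := by
    intro p
    have h3 : (⟨f ^ α p, hpowmem _ (hα1 p)⟩ : autSemigroup step)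
        = ⟨out step p, hmemσ p⟩ := hνinj _ _ (by rw [hνpow _ (hα1 p)])
    exact (congrArg Subtype.val h3).symm
  -- key computation
  have key : ∀ (n : ℕ) (a : A) (u : List A),
      (f ^ n) (a :: u) = aseq step q₀ a n :: (f ^ sExp step q₀ α a n) u := by
    intro n
    induction n with
    | zero => intro a u; rfl
    | succ n ih =>
      intro a u
      have h1 : f ^ (n + 1) = f * f ^ n := by rw [pow_succ']
      calc (f ^ (n + 1)) (a :: u) = f ((f ^ n) (a :: u)) := by rw [h1]; rfl
        _ = f (aseq step q₀ a n :: (f ^ sExp step q₀ α a n) u) := by rw [ih]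
        _ = (step q₀ (aseq step q₀ a n)).1
              :: out step (step q₀ (aseq step q₀ a n)).2 ((f ^ sExp step q₀ α a n) u) := rfl
        _ = aseq step q₀ a (n + 1)
              :: (f ^ α (step q₀ (aseq step q₀ a n)).2) ((f ^ sExp step q₀ α a n) u) := by
              rw [hout]; rfl
        _ = aseq step q₀ a (n + 1) :: (f ^ sExp step q₀ α a (n + 1)) u := by
              show _ = _ :: (f ^ (α (step q₀ (aseq step q₀ a n)).2 + sExp step q₀ α a n)) u
              rw [pow_add]; rfl
  have hsge : ∀ (a : A) (n : ℕ), n ≤ sExp step q₀ α a n := by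
    intro a n
    induction n with
    | zero => exact Nat.zero_le _
    | succ n ih => have := hα1 (step q₀ (aseq step q₀ a n)).2; show _ ≤ α _ + _; omega
  have hsge2 : ∀ (a : A) (n : ℕ),
      α (step q₀ a).2 + n ≤ sExp step q₀ α a (n + 1) := by
    intro a n
    induction n with
    | zero => show _ ≤ α (step q₀ (aseq step q₀ a 0)).2 + sExp step q₀ α a 0; rfl
    | succ n ih =>
      have := hα1 (step q₀ (aseq step q₀ a (n + 1))).2
      show _ ≤ α (step q₀ (aseq step q₀ a (n + 1))).2 + sExp step q₀ α a (n + 1)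
      omega
  have hgrow : ∀ (p : Q) (a : A), α (step p a).2 = sExp step q₀ α a (α p) := by
    intro p a
    have htail : ∀ u : List A,
        out step (step p a).2 u = (f ^ sExp step q₀ α a (α p)) u := by
      intro u
      have h1 : out step p (a :: u) = (f ^ α p) (a :: u) := by rw [hout p]
      rw [key (α p) a u] at h1
      have h2 : out step p (a :: u)
          = (step p a).1 :: out step (step p a).2 u := rfl
      rw [h2] at h1
      exact (List.cons.injEq _ _ _ _ ▸ h1).2
    have h3 : f ^ α (step p a).2 = f ^ sExp step q₀ α a (α p) := by
      funext u
      rw [← htail u, hout (step p a).2]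
    have h5 : α p ≤ sExp step q₀ α a (α p) := hsge a (α p)
    have h6 := hα1 p
    exact hfree _ _ (hα1 (step p a).2) (by omega) h3
  -- the maximal state
  have : Nonempty Q := ⟨q₀⟩
  obtain ⟨p, hp⟩ := Finite.exists_max α
  have hone : ∀ a : A, α (step q₀ a).2 = 1 := by
    intro a
    have h1 := hgrow p a
    have h2 : α (step p a).2 ≤ α p := hp _
    have h3 : α p ≤ sExp step q₀ α a (α p) := hsge a (α p)
    have h4 : sExp step q₀ α a (α p) = α p := by omega
    have h6 := hα1 p
    have h5 := hsge2 a (α p - 1)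
    rw [show α p - 1 + 1 = α p by omega] at h5
    have := hα1 (step q₀ a).2
    omega
  -- f acts letterwise
  set g : A → A := fun b => (step q₀ b).1 with hgdef
  have hmapf : ∀ u : List A, f u = u.map g := by
    intro u
    induction u with
    | nil => rfl
    | cons b v ih =>
      have h1 : f (b :: v) = (step q₀ b).1 :: out step (step q₀ b).2 v := rfl
      rw [h1, hout (step q₀ b).2, hone b, pow_one, ih]
      rfl
  have hpowmap : ∀ (n : ℕ) (u : List A), (f ^ n) u = u.map g^[n] := by
    intro n
    induction n with
    | zero => intro u; show u = u.map _; simp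
    | succ n ih =>
      intro u
      have h1 : f ^ (n + 1) = f * f ^ n := by rw [pow_succ']
      calc (f ^ (n + 1)) u = f ((f ^ n) u) := by rw [h1]; rfl
        _ = (u.map g^[n]).map g := by rw [ih, hmapf]
        _ = u.map (g ∘ g^[n]) := by rw [List.map_map]
        _ = u.map g^[n + 1] := by rw [Function.iterate_succ']
  obtain ⟨i, j, hij, heq⟩ :=
    Finite.exists_ne_map_eq_of_infinite (fun n : ℕ => g^[n])
  have : f ^ (i + 1) = f ^ (j + 1) := by
    funext u
    rw [hpowmap, hpowmap, Function.iterate_succ', Function.iterate_succ']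
    have heq' : g^[i] = g^[j] := heq
    rw [heq']
  have := hfree _ _ (by omega) (by omega) this
  exact hij (by omega)
end

section
/- For every n ≥ 2, the free semigroup of rank n is an automaton semigroup: the automaton over alphabet {1,…,n} with states q₁,…,qₙ and transitions qᵢ →(a/i) q_a for all states qᵢ and letters a generates a semigroup in which the states induce a free basis. -/
/-- For every `n ≥ 2`, the free semigroup of rank `n` is an automaton semigroup:
in the automaton over the alphabet `Fin n` with states `q₀, …, q_{n-1}` and
transitions `qᵢ —a/i→ q_a` (i.e. `step i a = (i, a)`), the states induce a free
basis: two nonempty state sequences induce the same function on `Σ*` if and only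
if they are equal. -/
theorem free_semigroup_is_automaton_semigroup (n : ℕ) (hn : 2 ≤ n) :
    let step : Fin n → Fin n → Fin n × Fin n := fun i a => (i, a)
    ∀ ps qs : List (Fin n), ps ≠ [] → qs ≠ [] →
      ((∀ u : List (Fin n), seqOut step ps u = seqOut step qs u) ↔ ps = qs) := by
  intro step ps qs hps hqs
  have out_eq : ∀ (p : Fin n) (u : List (Fin n)),
      out step p u = (p :: u).take u.length := by
    intro p u
    induction u generalizing p with
    | nil => rfl
    | cons a u ih => simp [out, step, ih]
  have seq_eq : ∀ (l : List (Fin n)) (u : List (Fin n)),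
      seqOut step l u = (l.reverse ++ u).take u.length := by
    intro l
    induction l with
    | nil => intro u; simp [seqOut]
    | cons p l ih =>
      intro u
      have hlen : (out step p u).length = u.length := by
        simp [out_eq]
      rw [seqOut, ih, hlen, out_eq]
      simp [List.take_append, List.take_take,
        Nat.min_eq_left (Nat.sub_le _ _), List.append_assoc]
  constructor
  · intro h
    have h' : ∀ u : List (Fin n),
        (ps.reverse ++ u).take u.length = (qs.reverse ++ u).take u.length := by
      intro u; rw [← seq_eq, ← seq_eq]; exact h u
    have key : ∀ (as bs : List (Fin n)), as.length < bs.length →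
        (∀ u : List (Fin n),
          (as.reverse ++ u).take u.length = (bs.reverse ++ u).take u.length) → False := by
      intro as bs hlt hh
      set x0 : Fin n := ⟨0, by omega⟩
      set x1 : Fin n := ⟨1, by omega⟩
      have get : ∀ x : Fin n,
          (bs.reverse)[as.length]'(by simpa using hlt) = x := by
        intro x
        have hu := hh (x :: List.replicate bs.length x0)
        have hL1 : as.length < ((as.reverse ++ (x :: List.replicate bs.length x0)).take
            (x :: List.replicate bs.length x0).length).length := by
          simp; omega
        have := List.getElem_of_eq hu hL1
        rw [List.getElem_take, List.getElem_take,
          List.getElem_append_right (by simp),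
          List.getElem_append_left (by simpa using hlt)] at this
        simpa using this.symm
      have := (get x0).symm.trans (get x1)
      simp [x0, x1, Fin.ext_iff] at this
    have hlen : ps.length = qs.length := by
      rcases Nat.lt_trichotomy ps.length qs.length with hlt | heq | hgt
      · exact absurd (key ps qs hlt h') (by simp)
      · exact heq
      · exact absurd (key qs ps hgt (fun u => (h' u).symm)) (by simp)
    have := h' (List.replicate ps.length (⟨0, by omega⟩ : Fin n))
    rw [List.length_replicate, List.take_left' (by simp),
      List.take_left' (by simp [hlen])] at this
    exact List.reverse_injective this
  · rintro rfl; intro u; rfl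
end
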